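/- Let G ⊂ ℂ^{n−1} be a domain and 𝔻 the unit disk, and let c denote the Carathéodory pseudodistance. Then for all a, z ∈ G and λ ∈ 𝔻, c_{G×𝔻}((a,0),(z,λ)) = max{c_G(a,z), c_𝔻(0,λ)}. In particular, for every r > 0, the Carathéodory ball satisfies B_{c_{G×𝔻}}((a,0); r) = B_{c_G}(a; r) × B_{c_𝔻}(0; r). -/

import Mathlib

open Complex Metric Set

/-- The Poincaré distance on the unit disk. -/
noncomputable def poincareDist (a b : ℂ) : ℝ :=
  (1 / 2) * Real.log
    ((1 + ‖a - b‖ / ‖1 - (starRingEnd ℂ) a * b‖) /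
     (1 - ‖a - b‖ / ‖1 - (starRingEnd ℂ) a * b‖))

/-- The Carathéodory pseudodistance of a domain D in a complex normed space. -/
noncomputable def carDist {E : Type*} [NormedAddCommGroup E] [NormedSpace ℂ E]
    (D : Set E) (p q : E) : ℝ :=
  sSup {r : ℝ | ∃ f : E → ℂ, DifferentiableOn ℂ f D ∧
    Set.MapsTo f D (ball (0 : ℂ) 1) ∧ r = poincareDist (f p) (f q)}

/-!
Composing with a disk automorphism shows `tanh c_D(p, q) = sup ‖f q‖` over holomorphic
`f : D → 𝔻` with `f p = 0`; on a connected domain this supremum is `< 1` by a Harnack inequality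
obtained by chaining the Schwarz–Pick lemma along `D`.

The projections of `G × 𝔻` give `≥`. For `≤`, let `F : G × 𝔻 → 𝔻` vanish at `(a, 0)`, put
`s = tanh c_G(a, z)` and `h = F (z, ·)`. Restricting `F` to the graphs of `w ↦ c f(w)` shows
`‖h ν‖ ≤ s` for `‖ν‖ < s`, and the maximum principle for `h ν / ν` on the annuli
`s t < ‖ν‖ < t`, `t → 1`, gives `‖h λ‖ ≤ ‖λ‖` for `‖λ‖ ≥ s`. Hence `‖F (z, λ)‖ ≤ max s ‖λ‖`.
-/

open Filter
open scoped ComplexConjugate Topology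

noncomputable def mobius (a z : ℂ) : ℂ := (z - a) / (1 - conj a * z)

section Disk

variable {a z : ℂ}

@[simp] theorem mobius_self (a : ℂ) : mobius a a = 0 := by simp [mobius]

theorem norm_one_sub_conj_mul_sq_sub_norm_sub_sq (a z : ℂ) :
    ‖1 - conj a * z‖ ^ 2 - ‖z - a‖ ^ 2 = (1 - ‖a‖ ^ 2) * (1 - ‖z‖ ^ 2) := by
  simp only [Complex.sq_norm, Complex.normSq_apply, Complex.sub_re, Complex.sub_im,
    Complex.mul_re, Complex.mul_im, Complex.one_re, Complex.one_im, Complex.conj_re,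
    Complex.conj_im]
  ring

theorem one_sub_norm_le_norm_one_sub_conj_mul (hz : ‖z‖ < 1) : 1 - ‖a‖ ≤ ‖1 - conj a * z‖ := by
  have : ‖conj a * z‖ ≤ ‖a‖ := by
    rw [norm_mul, Complex.norm_conj]
    exact mul_le_of_le_one_right (norm_nonneg a) hz.le
  calc 1 - ‖a‖ ≤ ‖(1 : ℂ)‖ - ‖conj a * z‖ := by rw [norm_one]; linarith
    _ ≤ ‖1 - conj a * z‖ := norm_sub_norm_le _ _

theorem norm_one_sub_conj_mul_pos (ha : ‖a‖ < 1) (hz : ‖z‖ < 1) : 0 < ‖1 - conj a * z‖ :=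
  (sub_pos.2 ha).trans_le (one_sub_norm_le_norm_one_sub_conj_mul hz)

theorem norm_mobius_lt_one (ha : ‖a‖ < 1) (hz : ‖z‖ < 1) : ‖mobius a z‖ < 1 := by
  have hd := norm_one_sub_conj_mul_pos ha hz
  rw [mobius, norm_div, div_lt_one hd]
  refine lt_of_pow_lt_pow_left₀ 2 hd.le ?_
  have := norm_one_sub_conj_mul_sq_sub_norm_sub_sq a z
  have : 0 < (1 - ‖a‖ ^ 2) * (1 - ‖z‖ ^ 2) := by
    apply mul_pos <;> nlinarith [norm_nonneg a, norm_nonneg z]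
  linarith

theorem norm_mobius_comm (a z : ℂ) : ‖mobius a z‖ = ‖mobius z a‖ := by
  have : ‖1 - conj a * z‖ = ‖1 - conj z * a‖ := by
    rw [← Complex.norm_conj (1 - conj z * a)]
    simp [mul_comm]
  rw [mobius, mobius, norm_div, norm_div, norm_sub_rev, this]

theorem mapsTo_mobius (ha : ‖a‖ < 1) : MapsTo (mobius a) (ball 0 1) (ball 0 1) := fun _ hz ↦
  mem_ball_zero_iff.2 (norm_mobius_lt_one ha (mem_ball_zero_iff.1 hz))

theorem differentiableOn_mobius (ha : ‖a‖ < 1) : DifferentiableOn ℂ (mobius a) (ball 0 1) :=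
  fun _ hz ↦ by
    have hd := norm_one_sub_conj_mul_pos ha (mem_ball_zero_iff.1 hz)
    exact ((differentiableAt_id.sub_const a).div ((differentiableAt_const _).sub
      (differentiableAt_id.const_mul _)) (norm_pos_iff.1 hd)).differentiableWithinAt

-- From `1 - ‖mobius a z‖ ^ 2 = (1 - ‖a‖ ^ 2) (1 - ‖z‖ ^ 2) / ‖1 - conj a * z‖ ^ 2`.
theorem one_sub_norm_mobius_mul_le (ha : ‖a‖ < 1) (hz : ‖z‖ < 1) :
    (1 - ‖mobius a z‖) * (1 - ‖a‖) ≤ 4 * (1 - ‖z‖) := by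
  have hd : 0 < ‖1 - conj a * z‖ := norm_one_sub_conj_mul_pos ha hz
  have hm : ‖z - a‖ = ‖mobius a z‖ * ‖1 - conj a * z‖ := by
    rw [mobius, norm_div, div_mul_cancel₀ _ hd.ne']
  have hkey := norm_one_sub_conj_mul_sq_sub_norm_sub_sq a z
  rw [hm] at hkey
  set m := ‖mobius a z‖
  set d := ‖1 - conj a * z‖
  have hm1 : m < 1 := norm_mobius_lt_one ha hz
  have hm0 : 0 ≤ m := norm_nonneg _
  have hA := norm_nonneg a
  have hZ := norm_nonneg z
  have hsq : (1 - ‖a‖) ^ 2 ≤ d ^ 2 :=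
    pow_le_pow_left₀ (by linarith) (one_sub_norm_le_norm_one_sub_conj_mul hz) 2
  have h1 : (1 - m) * (1 - ‖a‖) ^ 2 ≤ (1 - ‖a‖ ^ 2) * (1 - ‖z‖ ^ 2) := by
    calc (1 - m) * (1 - ‖a‖) ^ 2 ≤ (1 - m) * ((1 + m) * d ^ 2) := by
          gcongr
          nlinarith
      _ = (1 - ‖a‖ ^ 2) * (1 - ‖z‖ ^ 2) := by linear_combination hkey
  have h2 : (1 - ‖a‖ ^ 2) * (1 - ‖z‖ ^ 2) ≤ (1 - ‖a‖) * (4 * (1 - ‖z‖)) := by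
    have h4 : (1 + ‖a‖) * (1 + ‖z‖) ≤ 2 * 2 :=
      mul_le_mul (by linarith) (by linarith) (by linarith) (by norm_num)
    have : (1 - ‖a‖ ^ 2) * (1 - ‖z‖ ^ 2)
        = (1 - ‖a‖) * ((1 + ‖a‖) * (1 + ‖z‖) * (1 - ‖z‖)) := by ring
    rw [this]
    gcongr
    linarith
  have : (1 - ‖a‖) * ((1 - m) * (1 - ‖a‖)) ≤ (1 - ‖a‖) * (4 * (1 - ‖z‖)) := by
    linarith
  exact le_of_mul_le_mul_left this (by linarith)

theorem one_sub_norm_le_of_norm_mobius_le (ha : ‖a‖ < 1) (hz : ‖z‖ < 1)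
    (h : ‖mobius a z‖ ≤ 1 / 2) : 1 - ‖a‖ ≤ 8 * (1 - ‖z‖) := by
  nlinarith [one_sub_norm_mobius_mul_le ha hz, norm_nonneg a]

theorem poincareDist_eq_artanh (ha : ‖a‖ < 1) (hz : ‖z‖ < 1) :
    poincareDist a z = Real.artanh ‖mobius a z‖ := by
  have h1 := norm_mobius_lt_one ha hz
  rw [poincareDist, Real.artanh_eq_half_log ⟨by linarith [norm_nonneg (mobius a z)], h1.le⟩,
    mobius, norm_div, norm_sub_rev]

theorem poincareDist_zero_left (hz : ‖z‖ < 1) : poincareDist 0 z = Real.artanh ‖z‖ := by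
  rw [poincareDist_eq_artanh (by simp) hz]
  simp [mobius]

end Disk

section Harnack

variable {E : Type*} [NormedAddCommGroup E] [NormedSpace ℂ E] {D : Set E} {f : E → ℂ}

theorem norm_mobius_le_of_ball_subset (hf : DifferentiableOn ℂ f D)
    (hfD : MapsTo f D (ball 0 1)) {w w' : E} {r : ℝ} (hr : ball w r ⊆ D) (hw' : w' ∈ ball w r) :
    ‖mobius (f w) (f w')‖ ≤ ‖w' - w‖ / r := by
  have hw : w ∈ D := hr (mem_ball_self (pos_of_mem_ball hw'))
  have hfw : ‖f w‖ < 1 := mem_ball_zero_iff.1 (hfD hw)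
  have hg := (differentiableOn_mobius hfw).comp (hf.mono hr) (hfD.mono_left hr)
  have hgm : MapsTo (mobius (f w) ∘ f) (ball w r) (closedBall ((mobius (f w) ∘ f) w) 1) := by
    simpa using ((mapsTo_mobius hfw).comp (hfD.mono_left hr)).mono_right ball_subset_closedBall
  simpa [dist_eq_norm, div_eq_inv_mul] using Complex.dist_le_div_mul_dist_of_mapsTo_ball hg hgm hw'

/-- Harnack inequality for holomorphic maps into the unit disk. -/
theorem IsPreconnected.exists_one_sub_norm_le_mul (hD : IsOpen D) (hDc : IsPreconnected D)
    {p q : E} (hp : p ∈ D) (hq : q ∈ D) :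
    ∃ C > 0, ∀ f : E → ℂ, DifferentiableOn ℂ f D → MapsTo f D (ball 0 1) →
      1 - ‖f p‖ ≤ C * (1 - ‖f q‖) := by
  refine hDc.induction₂' (fun x y ↦ ∃ C > 0, ∀ f : E → ℂ, DifferentiableOn ℂ f D →
    MapsTo f D (ball 0 1) → 1 - ‖f x‖ ≤ C * (1 - ‖f y‖)) (fun x hx ↦ ?_) ?_ hp hq
  · obtain ⟨r, hr, hball⟩ := Metric.isOpen_iff.1 hD x hx
    filter_upwards [nhdsWithin_le_nhds (ball_mem_nhds x (half_pos hr))] with y hy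
    have hyD : y ∈ D := hball (ball_subset_ball (by linarith) hy)
    have hmob : ∀ f : E → ℂ, DifferentiableOn ℂ f D → MapsTo f D (ball 0 1) →
        ‖mobius (f x) (f y)‖ ≤ 1 / 2 := fun f hf hfD ↦
      (norm_mobius_le_of_ball_subset hf hfD hball (ball_subset_ball (by linarith) hy)).trans
        (by rw [div_le_iff₀ hr]; linarith [mem_ball_iff_norm.1 hy])
    have hx1 (f : E → ℂ) (hfD : MapsTo f D (ball 0 1)) := mem_ball_zero_iff.1 (hfD hx)
    have hy1 (f : E → ℂ) (hfD : MapsTo f D (ball 0 1)) := mem_ball_zero_iff.1 (hfD hyD)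
    refine ⟨⟨8, by norm_num, fun f hf hfD ↦ ?_⟩, ⟨8, by norm_num, fun f hf hfD ↦ ?_⟩⟩
    · exact one_sub_norm_le_of_norm_mobius_le (hx1 f hfD) (hy1 f hfD) (hmob f hf hfD)
    · exact one_sub_norm_le_of_norm_mobius_le (hy1 f hfD) (hx1 f hfD)
        ((norm_mobius_comm _ _).trans_le (hmob f hf hfD))
  · rintro x y z - - - ⟨C, hC, hxy⟩ ⟨C', hC', hyz⟩
    refine ⟨C * C', by positivity, fun f hf hfD ↦ (hxy f hf hfD).trans ?_⟩
    rw [mul_assoc]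
    exact mul_le_mul_of_nonneg_left (hyz f hf hfD) hC.le

theorem IsPreconnected.exists_norm_le_of_apply_eq_zero (hD : IsOpen D)
    (hDc : IsPreconnected D) {p q : E} (hp : p ∈ D) (hq : q ∈ D) :
    ∃ s < 1, ∀ f : E → ℂ, DifferentiableOn ℂ f D → MapsTo f D (ball 0 1) → f p = 0 →
      ‖f q‖ ≤ s := by
  obtain ⟨C, hC, hharnack⟩ := hDc.exists_one_sub_norm_le_mul hD hp hq
  refine ⟨1 - C⁻¹, by simpa using hC, fun f hf hfD hfp ↦ ?_⟩
  have := hharnack f hf hfD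
  rw [hfp, norm_zero, sub_zero] at this
  have : C⁻¹ ≤ 1 - ‖f q‖ := by rwa [inv_le_iff_one_le_mul₀' hC]
  linarith

end Harnack

section Caratheodory

variable {E : Type*} [NormedAddCommGroup E] [NormedSpace ℂ E] {D : Set E} {p q : E}

theorem poincareDist_le_carDist (hD : IsOpen D) (hDc : IsPreconnected D) (hp : p ∈ D)
    (hq : q ∈ D) {f : E → ℂ} (hf : DifferentiableOn ℂ f D) (hfD : MapsTo f D (ball 0 1)) :
    poincareDist (f p) (f q) ≤ carDist D p q := by
  obtain ⟨s, hs1, hs⟩ := hDc.exists_norm_le_of_apply_eq_zero hD hp hq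
  refine le_csSup ⟨Real.artanh s, ?_⟩ ⟨f, hf, hfD, rfl⟩
  rintro _ ⟨g, hg, hgD, rfl⟩
  have hgp : ‖g p‖ < 1 := mem_ball_zero_iff.1 (hgD hp)
  rw [poincareDist_eq_artanh hgp (mem_ball_zero_iff.1 (hgD hq))]
  exact Real.artanh_le_artanh (by linarith [norm_nonneg (mobius (g p) (g q))]) hs1
    (hs _ ((differentiableOn_mobius hgp).comp hg hgD) ((mapsTo_mobius hgp).comp hgD)
      (mobius_self _))

theorem carDist_le_of_forall {M : ℝ} (hp : p ∈ D) (hq : q ∈ D)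
    (h : ∀ g : E → ℂ, DifferentiableOn ℂ g D → MapsTo g D (ball 0 1) → g p = 0 →
      Real.artanh ‖g q‖ ≤ M) :
    carDist D p q ≤ M := by
  refine csSup_le ⟨_, 0, differentiableOn_const 0, fun _ _ ↦ by simp, rfl⟩ ?_
  rintro _ ⟨f, hf, hfD, rfl⟩
  have hfp : ‖f p‖ < 1 := mem_ball_zero_iff.1 (hfD hp)
  rw [poincareDist_eq_artanh hfp (mem_ball_zero_iff.1 (hfD hq))]
  exact h _ ((differentiableOn_mobius hfp).comp hf hfD) ((mapsTo_mobius hfp).comp hfD)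
    (mobius_self _)

theorem carDist_le_carDist_of_mapsTo {E' : Type*} [NormedAddCommGroup E'] [NormedSpace ℂ E']
    {D' : Set E'} (hD' : IsOpen D') (hD'c : IsPreconnected D') {p' q' : E'} (hp' : p' ∈ D')
    (hq' : q' ∈ D') {φ : E' → E} (hφ : DifferentiableOn ℂ φ D') (hφD : MapsTo φ D' D) :
    carDist D (φ p') (φ q') ≤ carDist D' p' q' := by
  refine csSup_le ⟨_, 0, differentiableOn_const 0, fun _ _ ↦ by simp, rfl⟩ ?_
  rintro _ ⟨f, hf, hfD, rfl⟩
  exact poincareDist_le_carDist hD' hD'c hp' hq' (hf.comp hφ hφD) (hfD.comp hφD)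

theorem norm_le_tanh_carDist (hD : IsOpen D) (hDc : IsPreconnected D) (hp : p ∈ D)
    (hq : q ∈ D) {f : E → ℂ} (hf : DifferentiableOn ℂ f D) (hfD : MapsTo f D (ball 0 1))
    (hfp : f p = 0) : ‖f q‖ ≤ Real.tanh (carDist D p q) := by
  have h := poincareDist_le_carDist hD hDc hp hq hf hfD
  rw [hfp, poincareDist_zero_left (mem_ball_zero_iff.1 (hfD hq)),
    ← Real.artanh_tanh (carDist D p q)] at h
  exact (Real.artanh_le_artanh_iff ⟨by linarith [norm_nonneg (f q)], mem_ball_zero_iff.1 (hfD hq)⟩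
    ⟨Real.neg_one_lt_tanh _, Real.tanh_lt_one _⟩).1 h

theorem exists_lt_norm_of_lt_tanh_carDist {x : ℝ} (hx0 : 0 ≤ x)
    (hx : x < Real.tanh (carDist D p q)) (hp : p ∈ D) (hq : q ∈ D) :
    ∃ g : E → ℂ, DifferentiableOn ℂ g D ∧ MapsTo g D (ball 0 1) ∧ g p = 0 ∧ x < ‖g q‖ := by
  have hx1 : x ∈ Ioo (-1) 1 := ⟨by linarith, hx.trans (Real.tanh_lt_one _)⟩
  have hlt : Real.artanh x < carDist D p q := by
    simpa [Real.artanh_tanh] using Real.artanh_lt_artanh (by linarith [hx1.1])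
      (Real.tanh_lt_one _) hx
  unfold carDist at hlt
  obtain ⟨_, ⟨f, hf, hfD, rfl⟩, hlt⟩ :=
    exists_lt_of_lt_csSup (by exact ⟨_, 0, differentiableOn_const 0, fun _ _ ↦ by simp, rfl⟩) hlt
  have hfp : ‖f p‖ < 1 := mem_ball_zero_iff.1 (hfD hp)
  have hmob := norm_mobius_lt_one hfp (mem_ball_zero_iff.1 (hfD hq))
  rw [poincareDist_eq_artanh hfp (mem_ball_zero_iff.1 (hfD hq))] at hlt
  refine ⟨_, (differentiableOn_mobius hfp).comp hf hfD, (mapsTo_mobius hfp).comp hfD,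
    mobius_self _, ?_⟩
  exact (Real.artanh_lt_artanh_iff hx1 ⟨by linarith [norm_nonneg (mobius (f p) (f q))], hmob⟩).1
    hlt

end Caratheodory

section OneVariable

variable {h : ℂ → ℂ}

/-- Maximum modulus for `h ν / ν` on the annulus `ρ < ‖ν‖ < t`. -/
theorem norm_le_div_of_annulus (hd : DifferentiableOn ℂ h (ball 0 1))
    (hm : MapsTo h (ball 0 1) (ball 0 1)) {ρ t : ℝ} (hρ : 0 < ρ) (ht : t < 1)
    (hinner : ∀ ν : ℂ, ‖ν‖ = ρ → ‖h ν‖ ≤ ρ / t) {lam : ℂ} (hρlam : ρ < ‖lam‖)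
    (hlamt : ‖lam‖ < t) : ‖h lam‖ ≤ ‖lam‖ / t := by
  have hρt : ρ < t := hρlam.trans hlamt
  have ht0 : 0 < t := hρ.trans hρt
  set U : Set ℂ := (‖·‖) ⁻¹' Ioo ρ t
  have hclosure : closure U ⊆ (‖·‖) ⁻¹' Icc ρ t := by
    simpa [closure_Ioo hρt.ne] using continuous_norm.closure_preimage_subset (Ioo ρ t)
  have hfrontier : frontier U ⊆ (‖·‖) ⁻¹' {ρ, t} := by
    simpa [frontier_Ioo hρt] using continuous_norm.frontier_preimage_subset (Ioo ρ t)
  have hdiff : DifferentiableOn ℂ (fun ν ↦ h ν / ν) ((‖·‖) ⁻¹' Icc ρ t) :=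
    (hd.mono fun ν hν ↦ mem_ball_zero_iff.2 (hν.2.trans_lt ht)).div differentiableOn_id
      fun ν hν ↦ norm_pos_iff.1 (hρ.trans_le hν.1)
  have hbound : ∀ ν ∈ frontier U, ‖h ν / ν‖ ≤ 1 / t := by
    intro ν hν
    rw [norm_div]
    rcases hfrontier hν with hνρ | hνt
    · rw [show ‖ν‖ = ρ from hνρ, div_le_iff₀ hρ]
      calc ‖h ν‖ ≤ ρ / t := hinner ν hνρ
        _ = 1 / t * ρ := by ring
    · have hνt : ‖ν‖ = t := hνt
      rw [hνt]
      gcongr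
      exact (mem_ball_zero_iff.1 (hm (mem_ball_zero_iff.2 (hνt.trans_lt ht)))).le
  have hlam0 : 0 < ‖lam‖ := hρ.trans hρlam
  have := Complex.norm_le_of_forall_mem_frontier_norm_le
    (isBounded_ball.subset fun ν hν ↦ mem_ball_zero_iff.2 hν.2)
    (hdiff.mono hclosure).diffContOnCl hbound (subset_closure ⟨hρlam, hlamt⟩)
  rwa [norm_div, div_le_iff₀ hlam0, one_div_mul_eq_div] at this

theorem norm_le_max_of_norm_le_on_ball (hd : DifferentiableOn ℂ h (ball 0 1))
    (hm : MapsTo h (ball 0 1) (ball 0 1)) {u : ℝ} (hu : ∀ ν : ℂ, ‖ν‖ < u → ‖h ν‖ ≤ u)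
    (h0 : ‖h 0‖ ≤ u) {lam : ℂ} (hlam : ‖lam‖ < 1) : ‖h lam‖ ≤ max u ‖lam‖ := by
  rcases lt_or_ge ‖lam‖ u with hlt | hle
  · exact (hu lam hlt).trans (le_max_left _ _)
  refine le_max_of_le_right ?_
  rcases ((norm_nonneg _).trans h0).eq_or_lt with rfl | hu0
  · exact Complex.norm_le_norm_of_mapsTo_ball hd (hm.mono_right ball_subset_closedBall)
      (norm_le_zero_iff.1 h0) hlam
  -- Apply the annulus estimate with radii `u t < ‖λ‖ < t` and let `t → 1`.
  have hlim : Tendsto (fun t ↦ ‖lam‖ / t) (𝓝[<] 1) (𝓝 (‖lam‖ / 1)) :=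
    (tendsto_const_nhds.div tendsto_id one_ne_zero).mono_left nhdsWithin_le_nhds
  refine ge_of_tendsto (by simpa using hlim) ?_
  filter_upwards [Ioo_mem_nhdsLT hlam] with t ht
  have ht0 : 0 < t := (norm_nonneg lam).trans_lt ht.1
  refine norm_le_div_of_annulus hd hm (mul_pos hu0 ht0) ht.2 (fun ν hν ↦ ?_)
    ((mul_lt_of_lt_one_right hu0 ht.2).trans_le hle) ht.1
  rw [mul_div_cancel_right₀ _ ht0.ne']
  exact hu ν (hν.trans_lt (mul_lt_of_lt_one_right hu0 ht.2))

end OneVariable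

section Product

variable {E : Type*} [NormedAddCommGroup E] [NormedSpace ℂ E] {G : Set E} {a z : E}

theorem norm_apply_le_max_of_mapsTo_prod_ball (hG : IsOpen G) (hGc : IsPreconnected G)
    (ha : a ∈ G) (hz : z ∈ G) {F : E × ℂ → ℂ} (hF : DifferentiableOn ℂ F (G ×ˢ ball 0 1))
    (hFD : MapsTo F (G ×ˢ ball 0 1) (ball 0 1)) (hF0 : F (a, 0) = 0) {lam : ℂ}
    (hlam : ‖lam‖ < 1) : ‖F (z, lam)‖ ≤ max (Real.tanh (carDist G a z)) ‖lam‖ := by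
  have hgraph : ∀ φ : E → ℂ, DifferentiableOn ℂ φ G → MapsTo φ G (ball 0 1) → φ a = 0 →
      ‖F (z, φ z)‖ ≤ Real.tanh (carDist G a z) := fun φ hφ hφG hφa ↦
    norm_le_tanh_carDist hG hGc ha hz (f := fun w ↦ F (w, φ w))
      (hF.comp (differentiableOn_id.prodMk hφ) fun w hw ↦ ⟨hw, hφG hw⟩)
      (fun w hw ↦ hFD ⟨hw, hφG hw⟩) (by simp [hφa, hF0])
  have hslice : DifferentiableOn ℂ (fun ν ↦ F (z, ν)) (ball 0 1) :=
    hF.comp ((differentiableOn_const z).prodMk differentiableOn_id) fun _ hν ↦ ⟨hz, hν⟩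
  refine norm_le_max_of_norm_le_on_ball hslice (fun _ hν ↦ hFD ⟨hz, hν⟩) (fun ν hν ↦ ?_)
    (hgraph 0 (differentiableOn_const 0) (fun _ _ ↦ by simp) rfl) hlam
  obtain ⟨g, hg, hgG, hga, hνg⟩ := exists_lt_norm_of_lt_tanh_carDist (norm_nonneg ν) hν ha hz
  have hgz : g z ≠ 0 := norm_pos_iff.1 ((norm_nonneg ν).trans_lt hνg)
  have hc : ‖ν / g z‖ < 1 := by rwa [norm_div, div_lt_one (norm_pos_iff.2 hgz)]
  have hmaps : MapsTo (fun w ↦ ν / g z * g w) G (ball 0 1) := fun w hw ↦ by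
    rw [mem_ball_zero_iff, norm_mul]
    exact mul_lt_one_of_nonneg_of_lt_one_left (norm_nonneg _) hc
      (mem_ball_zero_iff.1 (hgG hw)).le
  simpa [div_mul_cancel₀ _ hgz] using hgraph _ (hg.const_mul _) hmaps (by simp [hga])

theorem carDist_prod_ball (hG : IsOpen G) (hGc : IsPreconnected G) (ha : a ∈ G) (hz : z ∈ G)
    {lam : ℂ} (hlam : lam ∈ ball (0 : ℂ) 1) :
    carDist (G ×ˢ ball (0 : ℂ) 1) (a, 0) (z, lam) =
      max (carDist G a z) (carDist (ball (0 : ℂ) 1) 0 lam) := by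
  have hopen : IsOpen (G ×ˢ ball (0 : ℂ) 1) := hG.prod isOpen_ball
  have hconn : IsPreconnected (G ×ˢ ball (0 : ℂ) 1) := hGc.prod (convex_ball 0 1).isPreconnected
  have h00 : (0 : ℂ) ∈ ball (0 : ℂ) 1 := mem_ball_self one_pos
  have hlam1 : ‖lam‖ < 1 := mem_ball_zero_iff.1 hlam
  refine le_antisymm (carDist_le_of_forall ⟨ha, h00⟩ ⟨hz, hlam⟩ fun F hF hFD hF0 ↦ ?_)
    (max_le ?_ ?_)
  · have hF1 : -1 < ‖F (z, lam)‖ := by linarith [norm_nonneg (F (z, lam))]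
    rcases le_max_iff.1 (norm_apply_le_max_of_mapsTo_prod_ball hG hGc ha hz hF hFD hF0 hlam1)
      with h | h
    · refine le_max_of_le_left ?_
      simpa [Real.artanh_tanh] using Real.artanh_le_artanh hF1 (Real.tanh_lt_one _) h
    · refine le_max_of_le_right ((Real.artanh_le_artanh hF1 hlam1 h).trans ?_)
      simpa [poincareDist_zero_left hlam1] using
        poincareDist_le_carDist isOpen_ball (convex_ball (0 : ℂ) 1).isPreconnected h00 hlam
          differentiableOn_id (mapsTo_id _)
  · exact carDist_le_carDist_of_mapsTo (φ := Prod.fst) (p' := (a, 0)) (q' := (z, lam)) hopen hconn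
      ⟨ha, h00⟩ ⟨hz, hlam⟩ differentiableOn_fst fun _ hx ↦ hx.1
  · exact carDist_le_carDist_of_mapsTo (φ := Prod.snd) (p' := (a, 0)) (q' := (z, lam)) hopen hconn
      ⟨ha, h00⟩ ⟨hz, hlam⟩ differentiableOn_snd fun _ hx ↦ hx.2

end Product

/-- Product formula for the Carathéodory pseudodistance of G × 𝔻, and the
resulting product decomposition of Carathéodory balls. -/
theorem stmt8 (n : ℕ) (G : Set (Fin (n - 1) → ℂ)) (hopen : IsOpen G)
    (hconn : IsConnected G) (a z : Fin (n - 1) → ℂ) (ha : a ∈ G) (hz : z ∈ G)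
    (lam : ℂ) (hlam : lam ∈ ball (0 : ℂ) 1) :
    carDist (G ×ˢ ball (0 : ℂ) 1) (a, 0) (z, lam) =
      max (carDist G a z) (carDist (ball (0 : ℂ) 1) 0 lam) ∧
    ∀ r > (0 : ℝ),
      {x ∈ G ×ˢ ball (0 : ℂ) 1 | carDist (G ×ˢ ball (0 : ℂ) 1) (a, 0) x < r} =
        {w ∈ G | carDist G a w < r} ×ˢ
          {μ ∈ ball (0 : ℂ) 1 | carDist (ball (0 : ℂ) 1) 0 μ < r} := by
  refine ⟨carDist_prod_ball hopen hconn.isPreconnected ha hz hlam, fun r _ ↦ ?_⟩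
  ext ⟨w, μ⟩
  simp only [mem_prod, mem_ofPred_eq]
  constructor
  · rintro ⟨⟨hw, hμ⟩, hlt⟩
    rw [carDist_prod_ball hopen hconn.isPreconnected ha hw hμ, max_lt_iff] at hlt
    exact ⟨⟨hw, hlt.1⟩, hμ, hlt.2⟩
  · rintro ⟨⟨hw, hw'⟩, hμ, hμ'⟩
    rw [carDist_prod_ball hopen hconn.isPreconnected ha hw hμ]
    exact ⟨⟨hw, hμ⟩, max_lt hw' hμ'⟩
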